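/- Let D ≥ 2 and s > 0. Let (c_j^{(s)})_{j≥1} be the nondecreasing enumeration (with multiplicity) of the multiset { (∏_{k=1}^D 𝐣^k)^s : 𝐣 ∈ (ℕ⁺)^D }. Then c_j^{(s)} = (c_j)^s, where (c_j) is the nondecreasing enumeration of { ∏_{k=1}^D 𝐣^k : 𝐣 ∈ (ℕ⁺)^D }, and c_j^{(s)} = Θ( ( j·log^{−(D−1)} j )^s ) as j → ∞; that is, there exist constants C₁, C₂ > 0 depending only on s and D such that for all j ≥ 2, C₁·( j / log^{D−1} j )^s ≤ c_j^{(s)} ≤ C₂·( j / log^{D−1} j )^s. -/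

import Mathlib

/-- The `D`-fold divisor function: the number of ordered `D`-tuples of positive
integers whose product is `n`. -/
noncomputable def tauD (D n : ℕ) : ℕ :=
  Nat.card {f : Fin D → ℕ+ // (∏ k, ((f k : ℕ))) = n}

/-- `T_D(x) = Σ_{n ≤ x} τ_D(n)`, the sum over positive integers `n ≤ x`. -/
noncomputable def TD (D : ℕ) (x : ℝ) : ℕ :=
  ∑ n ∈ Finset.Icc 1 ⌊x⌋₊, tauD D n

/-- The `j`-th element (for `j ≥ 1`) of the nondecreasing enumeration (with multiplicity)
of the multiset `{ ∏_k 𝐣^k : 𝐣 ∈ (ℕ⁺)^D }`, characterized as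
`c_j = min { m ∈ ℕ⁺ : T_D(m) ≥ j }`. -/
noncomputable def cseq (D j : ℕ) : ℕ :=
  sInf {m : ℕ | 0 < m ∧ j ≤ TD D (m : ℝ)}

def pbig (m : ℕ) : ℕ+ := ⟨max m 1, lt_of_lt_of_le one_pos (le_max_right m 1)⟩

noncomputable def boxP (D m : ℕ) : Finset (Fin D → ℕ+) :=
  Fintype.piFinset fun _ => Finset.Icc 1 (pbig m)

lemma one_le_prod_pnat {D : ℕ} (f : Fin D → ℕ+) : 1 ≤ ∏ k, ((f k : ℕ)) :=
  Finset.one_le_prod' fun i _ => (f i).one_le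

lemma mem_box {D m : ℕ} {f : Fin D → ℕ+} (h : ∏ k, ((f k : ℕ)) ≤ m) : f ∈ boxP D m := by
  unfold boxP
  rw [Fintype.mem_piFinset]
  intro k
  rw [Finset.mem_Icc]
  refine ⟨(f k).one_le, ?_⟩
  have h1 : (f k : ℕ) ≤ ∏ i, ((f i : ℕ)) :=
    Finset.single_le_prod' (f := fun i => ((f i : ℕ))) (fun i _ => (f i).2) (Finset.mem_univ k)
  have h2 : (f k : ℕ) ≤ ((pbig m : ℕ)) := le_trans (le_trans h1 h) (le_max_left m 1)
  exact (PNat.coe_le_coe _ _).1 h2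

lemma tauD_eq_card (D n : ℕ) :
    tauD D n = ((boxP D n).filter fun f => ∏ k, ((f k : ℕ)) = n).card := by
  have hset : {f : Fin D → ℕ+ | ∏ k, ((f k : ℕ)) = n}
      = ↑((boxP D n).filter fun f => ∏ k, ((f k : ℕ)) = n) := by
    ext f
    rw [Finset.mem_coe, Finset.mem_filter]
    simp only [Set.mem_setOf_eq]
    constructor
    · intro h; exact ⟨mem_box h.le, h⟩
    · intro h; exact h.2
  have : tauD D n = Nat.card ↥{f : Fin D → ℕ+ | ∏ k, ((f k : ℕ)) = n} := rfl
  rw [this, Nat.card_coe_set_eq, hset, Set.ncard_coe_finset]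

lemma tauD_eq_card' {D m n : ℕ} (hnm : n ≤ m) :
    tauD D n = ((boxP D m).filter fun f => ∏ k, ((f k : ℕ)) = n).card := by
  rw [tauD_eq_card]
  congr 1
  ext f
  simp only [Finset.mem_filter]
  exact ⟨fun h => ⟨mem_box (h.2.le.trans hnm), h.2⟩, fun h => ⟨mem_box h.2.le, h.2⟩⟩

lemma TD_coe (D m : ℕ) :
    TD D (m : ℝ) = ((boxP D m).filter fun f => ∏ k, ((f k : ℕ)) ≤ m).card := by
  rw [TD, Nat.floor_natCast]
  rw [Finset.card_eq_sum_card_fiberwise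
    (f := fun f : Fin D → ℕ+ => ∏ k, ((f k : ℕ))) (t := Finset.Icc 1 m)
    (fun f hf => by
      rw [Finset.mem_coe, Finset.mem_filter] at hf
      exact Finset.mem_coe.2 (Finset.mem_Icc.2 ⟨one_le_prod_pnat f, hf.2⟩))]
  refine Finset.sum_congr rfl fun n hn => ?_
  rw [Finset.mem_Icc] at hn
  rw [tauD_eq_card' hn.2, Finset.filter_filter]
  congr 1
  refine Finset.filter_congr fun f _ => ?_
  constructor
  · intro h; exact ⟨h.le.trans hn.2, h⟩
  · intro h; exact h.2

lemma prodIteOne {D n : ℕ} [NeZero D] (hn : 0 < n) :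
    ∏ k : Fin D, (((if k = 0 then (⟨n, hn⟩ : ℕ+) else 1) : ℕ+) : ℕ) = n := by
  rw [Finset.prod_eq_single (0 : Fin D)]
  · simp
  · intro k _ hk; simp [hk]
  · simp

lemma tauD_one_le {D n : ℕ} (hD : 1 ≤ D) (hn : 1 ≤ n) : 1 ≤ tauD D n := by
  haveI : NeZero D := ⟨by omega⟩
  rw [tauD_eq_card]
  refine Finset.card_pos.2 ⟨fun k => if k = 0 then (⟨n, hn⟩ : ℕ+) else 1, ?_⟩
  rw [Finset.mem_filter]
  exact ⟨mem_box (prodIteOne hn).le, prodIteOne hn⟩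

lemma tauD_one {D : ℕ} : tauD D 1 = 1 := by
  rw [tauD_eq_card]
  have : ((boxP D 1).filter fun f => ∏ k, ((f k : ℕ)) = 1) = {fun _ => 1} := by
    ext f
    simp only [Finset.mem_filter, Finset.mem_singleton]
    constructor
    · rintro ⟨-, hf⟩
      funext k
      have h1 : (f k : ℕ) ≤ ∏ i, ((f i : ℕ)) :=
        Finset.single_le_prod' (f := fun i => ((f i : ℕ))) (fun i _ => (f i).2) (Finset.mem_univ k)
      rw [hf] at h1
      exact PNat.coe_injective (le_antisymm h1 (f k).one_le)
    · rintro rfl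
      refine ⟨mem_box (by simp), by simp⟩
  rw [this, Finset.card_singleton]

lemma le_TD {D m : ℕ} (hD : 1 ≤ D) : m ≤ TD D (m : ℝ) := by
  rw [TD, Nat.floor_natCast]
  calc m = ∑ _n ∈ Finset.Icc 1 m, 1 := by simp [Nat.card_Icc]
  _ ≤ ∑ n ∈ Finset.Icc 1 m, tauD D n :=
      Finset.sum_le_sum fun n hn => tauD_one_le hD (Finset.mem_Icc.1 hn).1

lemma TD_one {D : ℕ} : TD D ((1 : ℕ) : ℝ) = 1 := by
  rw [TD, Nat.floor_natCast]
  simp [tauD_one]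

lemma TD_D_one (m : ℕ) : TD 1 (m : ℝ) = m := by
  rw [TD, Nat.floor_natCast]
  rw [Finset.sum_congr rfl fun n hn => ?_]
  · rw [Finset.sum_const, Nat.card_Icc, smul_eq_mul, mul_one]; omega
  · show tauD 1 n = 1
    have hn1 : 1 ≤ n := (Finset.mem_Icc.1 hn).1
    rw [tauD_eq_card]
    have : ((boxP 1 n).filter fun f => ∏ k, ((f k : ℕ)) = n) = {fun _ => Nat.toPNat n hn1} := by
      ext f
      simp only [Finset.mem_filter, Finset.mem_singleton]
      constructor
      · rintro ⟨-, hf⟩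
        funext k
        have hk : k = 0 := Subsingleton.elim _ _
        subst hk
        rw [Fin.prod_univ_one] at hf
        exact PNat.coe_injective hf
      · rintro rfl
        have : ∏ k : Fin 1, (((fun _ : Fin 1 => (⟨n, hn1⟩ : ℕ+)) k : ℕ)) = n := by
          rw [Fin.prod_univ_one]
        exact ⟨mem_box this.le, this⟩
    rw [this, Finset.card_singleton]

lemma TD_succ (D m : ℕ) :
    TD (D + 1) (m : ℝ) = ∑ d ∈ Finset.Icc 1 m, TD D ((m / d : ℕ) : ℝ) := by
  rw [TD_coe]
  rw [Finset.card_eq_sum_card_fiberwise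
    (f := fun f : Fin (D + 1) → ℕ+ => ((f 0 : ℕ))) (t := Finset.Icc 1 m)
    (fun f hf => by
      rw [Finset.mem_coe, Finset.mem_filter] at hf
      have h1 : (f 0 : ℕ) ≤ ∏ i, ((f i : ℕ)) :=
        Finset.single_le_prod' (f := fun i => ((f i : ℕ))) (fun i _ => (f i).2)
          (Finset.mem_univ 0)
      exact Finset.mem_coe.2 (Finset.mem_Icc.2 ⟨(f 0).2, h1.trans hf.2⟩))]
  refine Finset.sum_congr rfl fun d hd => ?_
  rw [Finset.mem_Icc] at hd
  have hd0 : 0 < d := hd.1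
  rw [TD_coe]
  rw [Finset.filter_filter]
  refine Finset.card_bij' (fun f _ => Fin.tail f)
    (fun g _ => Fin.cons ⟨d, hd0⟩ g) ?_ ?_ ?_ ?_
  · intro f hf
    rw [Finset.mem_filter] at hf
    obtain ⟨-, hfm, hf0⟩ := hf
    have hsplit : ∏ i, ((f i : ℕ)) = (f 0 : ℕ) * ∏ i : Fin D, ((f i.succ : ℕ)) :=
      Fin.prod_univ_succ _
    have hprod : ∏ i : Fin D, ((Fin.tail f i : ℕ)) ≤ m / d := by
      rw [Nat.le_div_iff_mul_le hd0]
      calc (∏ i : Fin D, ((Fin.tail f i : ℕ))) * d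
          = (f 0 : ℕ) * ∏ i : Fin D, ((f i.succ : ℕ)) := by
            rw [mul_comm, hf0]
            congr 1
        _ ≤ m := hsplit ▸ hfm
    exact Finset.mem_filter.2 ⟨mem_box hprod, hprod⟩
  · intro g hg
    rw [Finset.mem_filter] at hg
    obtain ⟨-, hg⟩ := hg
    have hsplit : ∏ i, (((Fin.cons (⟨d, hd0⟩ : ℕ+) g : Fin (D+1) → ℕ+) i : ℕ))
        = d * ∏ i : Fin D, ((g i : ℕ)) := by
      rw [Fin.prod_univ_succ]
      rfl
    have hle : ∏ i, (((Fin.cons (⟨d, hd0⟩ : ℕ+) g : Fin (D+1) → ℕ+) i : ℕ)) ≤ m := by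
      rw [hsplit, mul_comm]
      exact (Nat.le_div_iff_mul_le hd0).1 hg
    refine Finset.mem_filter.2 ⟨mem_box hle, hle, ?_⟩
    rfl
  · intro f hf
    rw [Finset.mem_filter] at hf
    have : f 0 = (⟨d, hd0⟩ : ℕ+) := PNat.coe_injective hf.2.2
    show Fin.cons (⟨d, hd0⟩ : ℕ+) (Fin.tail f) = f
    rw [← this, Fin.cons_self_tail]
  · intro g _
    exact Fin.tail_cons _ _

open Real in
lemma harm_ub : ∀ m : ℕ, ∑ d ∈ Finset.Icc 1 m, ((d : ℝ))⁻¹ ≤ 1 + Real.log m := by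
  intro m
  induction m with
  | zero => simp
  | succ m ih =>
    rcases Nat.eq_zero_or_pos m with rfl | hm
    · norm_num
    rw [Finset.sum_Icc_succ_top (by omega)]
    have hkey : ((m + 1 : ℕ) : ℝ)⁻¹ ≤ Real.log (m + 1) - Real.log m := by
      have hlog : Real.log ((m : ℝ) / (m + 1)) ≤ (m : ℝ) / (m + 1) - 1 :=
        Real.log_le_sub_one_of_pos (by positivity)
      rw [Real.log_div (by positivity) (by positivity)] at hlog
      have h1 : (m : ℝ) / (m + 1) - 1 = -(1 / (m + 1)) := by
        field_simp
        ring
      rw [h1, ← inv_eq_one_div] at hlog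
      push_cast
      linarith
    have hlog : Real.log m ≤ Real.log (m + 1) := by
      apply Real.log_le_log (by positivity)
      push_cast; linarith
    push_cast at ih hkey ⊢
    linarith

open Real in
lemma harm_lb : ∀ m : ℕ, Real.log (m + 1) ≤ ∑ d ∈ Finset.Icc 1 m, ((d : ℝ))⁻¹ := by
  intro m
  induction m with
  | zero => simp
  | succ m ih =>
    rw [Finset.sum_Icc_succ_top (by omega)]
    have hkey : Real.log (m + 1 + 1) - Real.log (m + 1) ≤ ((m + 1 : ℕ) : ℝ)⁻¹ := by
      have hlog : Real.log ((m + 1 + 1 : ℝ) / (m + 1)) ≤ (m + 1 + 1 : ℝ) / (m + 1) - 1 :=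
        Real.log_le_sub_one_of_pos (by positivity)
      rw [Real.log_div (by positivity) (by positivity)] at hlog
      have h1 : (m + 1 + 1 : ℝ) / (m + 1) - 1 = 1 / (m + 1) := by
        field_simp
        ring
      rw [h1, ← inv_eq_one_div] at hlog
      push_cast
      linarith
    push_cast at ih hkey ⊢
    linarith

lemma TD_upper : ∀ D, 1 ≤ D → ∀ m : ℕ,
    (TD D (m : ℝ) : ℝ) ≤ m * (1 + Real.log m) ^ (D - 1) := by
  intro D
  induction D with
  | zero => omega
  | succ D ih =>
    intro _ m
    rcases Nat.eq_zero_or_pos D with rfl | hD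
    · rw [TD_D_one]; simp
    have hm0 : (0 : ℝ) ≤ Real.log m := by
      rcases Nat.eq_zero_or_pos m with rfl | hm
      · simp
      · exact Real.log_natCast_nonneg m
    have hbase : (0 : ℝ) ≤ 1 + Real.log m := by linarith
    rw [TD_succ]
    push_cast
    calc (∑ d ∈ Finset.Icc 1 m, (TD D ((m / d : ℕ) : ℝ) : ℝ))
        ≤ ∑ d ∈ Finset.Icc 1 m, (m / (d : ℝ)) * (1 + Real.log m) ^ (D - 1) := by
          refine Finset.sum_le_sum fun d hd => ?_
          rw [Finset.mem_Icc] at hd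
          have hd0 : (0 : ℝ) < d := by exact_mod_cast hd.1
          have h1 : (TD D ((m / d : ℕ) : ℝ) : ℝ) ≤ (m / d : ℕ) * (1 + Real.log (m / d : ℕ)) ^ (D - 1) :=
            ih (by omega) (m / d)
          have hq1 : 1 ≤ m / d := Nat.one_le_div_iff hd.1 |>.2 hd.2
          have h2 : ((m / d : ℕ) : ℝ) ≤ (m : ℝ) / d := Nat.cast_div_le
          have h3 : Real.log ((m / d : ℕ) : ℝ) ≤ Real.log m := by
            apply Real.log_le_log (by exact_mod_cast hq1)
            exact_mod_cast Nat.div_le_self m d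
          have h4 : (0 : ℝ) ≤ 1 + Real.log ((m / d : ℕ) : ℝ) := by
            have : (0:ℝ) ≤ Real.log ((m / d : ℕ) : ℝ) := Real.log_natCast_nonneg _
            linarith
          calc (TD D ((m / d : ℕ) : ℝ) : ℝ)
              ≤ (m / d : ℕ) * (1 + Real.log (m / d : ℕ)) ^ (D - 1) := h1
            _ ≤ ((m : ℝ) / d) * (1 + Real.log m) ^ (D - 1) := by
                apply mul_le_mul h2 (pow_le_pow_left₀ h4 (by linarith) _) (by positivity)
                positivity
      _ = (m : ℝ) * (1 + Real.log m) ^ (D - 1) * ∑ d ∈ Finset.Icc 1 m, ((d : ℝ))⁻¹ := by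
          rw [Finset.mul_sum]
          refine Finset.sum_congr rfl fun d _ => ?_
          rw [div_eq_mul_inv]
          ring
      _ ≤ (m : ℝ) * (1 + Real.log m) ^ (D - 1) * (1 + Real.log m) := by
          apply mul_le_mul_of_nonneg_left (harm_ub m) (by positivity)
      _ = (m : ℝ) * (1 + Real.log m) ^ (D + 1 - 1) := by
          rw [mul_assoc, ← pow_succ]
          congr 2
          try omega

lemma TD_lower : ∀ D, 1 ≤ D → ∃ a : ℝ, 0 < a ∧ ∃ N₀ : ℕ, 2 ≤ N₀ ∧
    ∀ m : ℕ, N₀ ≤ m → a * m * (Real.log m) ^ (D - 1) ≤ (TD D (m : ℝ) : ℝ) := by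
  intro D
  induction D with
  | zero => omega
  | succ D ih =>
    intro _
    rcases Nat.eq_zero_or_pos D with rfl | hD
    · exact ⟨1, one_pos, 2, le_refl 2, fun m _ => by rw [TD_D_one]; simp⟩
    obtain ⟨a, ha, N₀, hN₀, hbound⟩ := ih hD
    obtain ⟨E, rfl⟩ : ∃ E, D = E + 1 := ⟨D - 1, by omega⟩
    refine ⟨a * (1/4) ^ E / 4, by positivity, max (N₀ * N₀) 16, le_trans (by norm_num) (le_max_right _ _), fun m hm => ?_⟩
    have h16 : 16 ≤ m := le_trans (le_max_right _ _) hm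
    have hN2 : N₀ * N₀ ≤ m := le_trans (le_max_left _ _) hm
    set r := Nat.sqrt m with hr
    have hr4 : 4 ≤ r := Nat.le_sqrt.2 (by omega)
    have hrN : N₀ ≤ r := Nat.le_sqrt.2 hN2
    have hrm : r ≤ m := Nat.sqrt_le_self m
    have hm0 : 0 < m := by omega
    have hmR : (0:ℝ) < m := by exact_mod_cast hm0
    have hrR : (0:ℝ) < r := by exact_mod_cast (by omega : 0 < r)
    have hr4R : (4:ℝ) ≤ r := by exact_mod_cast hr4
    -- log facts
    have hlogm0 : (0:ℝ) ≤ Real.log m := Real.log_natCast_nonneg m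
    have hlog16 : Real.log 16 ≤ Real.log m := by
      apply Real.log_le_log (by norm_num)
      exact_mod_cast h16
    have h16eq : Real.log 16 = 4 * Real.log 2 := by
      rw [show (16:ℝ) = 2 ^ 4 by norm_num, Real.log_pow]
      norm_num
    have hlog2m : 4 * Real.log 2 ≤ Real.log m := h16eq ▸ hlog16
    have hmlt : (m:ℝ) ≤ ((r:ℝ) + 1) ^ 2 := by
      have h0 := Nat.lt_succ_sqrt m
      have : m < (r + 1) * (r + 1) := by
        simpa [Nat.succ_eq_add_one, hr] using h0
      have h2 : (m:ℝ) < ((r:ℝ) + 1) * ((r:ℝ) + 1) := by exact_mod_cast this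
      nlinarith
    have hlogm2r : Real.log m ≤ 2 * Real.log ((r:ℝ) + 1) := by
      calc Real.log m ≤ Real.log (((r:ℝ) + 1) ^ 2) := Real.log_le_log hmR hmlt
        _ = 2 * Real.log ((r:ℝ) + 1) := by rw [Real.log_pow]; norm_num
    have hlogr1 : Real.log ((r:ℝ) + 1) ≤ Real.log 2 + Real.log r := by
      calc Real.log ((r:ℝ) + 1) ≤ Real.log (2 * r) := by
            apply Real.log_le_log (by linarith)
            linarith
        _ = Real.log 2 + Real.log r := Real.log_mul (by norm_num) (by linarith)
    have hlogr : (1/4) * Real.log m ≤ Real.log r := by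
      have h2 : Real.log 2 ≤ (1/4) * Real.log m := by linarith
      linarith
    have hlogr1m : (1/2) * Real.log m ≤ Real.log ((r:ℝ) + 1) := by linarith
    -- termwise bound
    have hterm : ∀ d ∈ Finset.Icc 1 r,
        a * ((m:ℝ) / (2 * d)) * ((1/4) * Real.log m) ^ E ≤ (TD (E+1) ((m / d : ℕ) : ℝ) : ℝ) := by
      intro d hd
      rw [Finset.mem_Icc] at hd
      have hd0 : 0 < d := hd.1
      have hdR : (0:ℝ) < d := by exact_mod_cast hd0
      set q := m / d with hqdef
      have hq_ge_r : r ≤ q := by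
        calc r ≤ m / r := (Nat.le_div_iff_mul_le (by omega)).2 (by simpa [pow_two] using Nat.sqrt_le' m)
          _ ≤ m / d := Nat.div_le_div_left hd.2 hd0
      have hqN : N₀ ≤ q := le_trans hrN hq_ge_r
      have hq0 : 0 < q := by omega
      have hqR : (0:ℝ) < q := by exact_mod_cast hq0
      have hIH := hbound q hqN
      have hq2 : (m:ℝ) / (2 * d) ≤ (q:ℝ) := by
        have h1 : m < d * q + d := by
          calc m = d * q + m % d := (Nat.div_add_mod m d).symm
            _ < d * q + d := Nat.add_lt_add_left (Nat.mod_lt m hd0) _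
        have hdq : d ≤ d * q := Nat.le_mul_of_pos_right d hq0
        have h2 : m < 2 * d * q := by
          calc m < d * q + d := h1
            _ ≤ d * q + d * q := Nat.add_le_add_left hdq _
            _ = 2 * d * q := by ring
        have h3 : (m:ℝ) < 2 * d * q := by exact_mod_cast h2
        rw [div_le_iff₀ (by positivity)]
        nlinarith
      have hlogq : (1/4) * Real.log m ≤ Real.log q := by
        calc (1/4) * Real.log m ≤ Real.log r := hlogr
          _ ≤ Real.log q := Real.log_le_log hrR (by exact_mod_cast hq_ge_r)
      have hpow : ((1/4) * Real.log m) ^ E ≤ (Real.log q) ^ E :=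
        pow_le_pow_left₀ (by positivity) hlogq E
      calc a * ((m:ℝ) / (2 * d)) * ((1/4) * Real.log m) ^ E
          ≤ a * (q:ℝ) * (Real.log q) ^ E := by
            apply mul_le_mul (mul_le_mul_of_nonneg_left hq2 ha.le) hpow (by positivity)
            positivity
        _ ≤ (TD (E+1) ((q : ℕ) : ℝ) : ℝ) := by
            have := hbound q hqN
            simpa using this
    -- sum it up
    have hsum_le : ∑ d ∈ Finset.Icc 1 r, (a * ((m:ℝ) / (2 * d)) * ((1/4) * Real.log m) ^ E)
        ≤ (TD (E+1+1) (m : ℝ) : ℝ) := by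
      calc ∑ d ∈ Finset.Icc 1 r, (a * ((m:ℝ) / (2 * d)) * ((1/4) * Real.log m) ^ E)
          ≤ ∑ d ∈ Finset.Icc 1 r, (TD (E+1) ((m / d : ℕ) : ℝ) : ℝ) := Finset.sum_le_sum hterm
        _ ≤ ∑ d ∈ Finset.Icc 1 m, (TD (E+1) ((m / d : ℕ) : ℝ) : ℝ) := by
            apply Finset.sum_le_sum_of_subset_of_nonneg
              (Finset.Icc_subset_Icc le_rfl hrm)
            intro i _ _
            positivity
        _ = (TD (E+1+1) (m : ℝ) : ℝ) := by
            rw [TD_succ]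
            push_cast
            rfl
    refine le_trans ?_ hsum_le
    -- closed form of the sum
    have hclosed : ∑ d ∈ Finset.Icc 1 r, (a * ((m:ℝ) / (2 * d)) * ((1/4) * Real.log m) ^ E)
        = a * ((1/4) * Real.log m) ^ E * ((m:ℝ) / 2) * ∑ d ∈ Finset.Icc 1 r, ((d:ℝ))⁻¹ := by
      rw [Finset.mul_sum]
      refine Finset.sum_congr rfl fun d _ => ?_
      rw [div_eq_mul_inv, mul_inv, div_eq_mul_inv]
      ring
    rw [hclosed]
    have hharm : (1/2) * Real.log m ≤ ∑ d ∈ Finset.Icc 1 r, ((d:ℝ))⁻¹ := by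
      calc (1/2) * Real.log m ≤ Real.log ((r:ℝ) + 1) := hlogr1m
        _ ≤ ∑ d ∈ Finset.Icc 1 r, ((d:ℝ))⁻¹ := by
            have := harm_lb r
            push_cast at this ⊢
            linarith
    calc a * (1/4) ^ E / 4 * m * Real.log m ^ (E + 1 + 1 - 1)
        = (a * ((1/4) * Real.log m) ^ E * ((m:ℝ) / 2)) * ((1/2) * Real.log m) := by
          rw [mul_pow]
          have : (E + 1 + 1 - 1) = E + 1 := by omega
          rw [this, pow_succ]
          ring
      _ ≤ (a * ((1/4) * Real.log m) ^ E * ((m:ℝ) / 2)) * ∑ d ∈ Finset.Icc 1 r, ((d:ℝ))⁻¹ := by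
          apply mul_le_mul_of_nonneg_left hharm
          positivity

noncomputable def pfun {D : ℕ} (b : ℕ ≃ (Fin D → ℕ+)) (j : ℕ) : ℕ := ∏ k, ((b j k : ℕ))

lemma pfun_pos {D : ℕ} (b : ℕ ≃ (Fin D → ℕ+)) (j : ℕ) : 0 < pfun b j :=
  one_le_prod_pnat (b j)

lemma cseq_eq_pfun {D : ℕ} (b : ℕ ≃ (Fin D → ℕ+)) (hmono : Monotone (pfun b)) (j : ℕ) :
    cseq D (j + 1) = pfun b j := by
  have hmemT : j + 1 ≤ TD D ((pfun b j : ℕ) : ℝ) := by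
    rw [TD_coe]
    have hsub : (Finset.range (j+1)).image b
        ⊆ (boxP D (pfun b j)).filter (fun f => ∏ k, ((f k : ℕ)) ≤ pfun b j) := by
      intro f hf
      simp only [Finset.mem_image, Finset.mem_range] at hf
      obtain ⟨i, hi, rfl⟩ := hf
      have hle : pfun b i ≤ pfun b j := hmono (by omega)
      exact Finset.mem_filter.2 ⟨mem_box hle, hle⟩
    calc j + 1 = ((Finset.range (j+1)).image b).card := by
          rw [Finset.card_image_of_injective _ b.injective, Finset.card_range]
      _ ≤ _ := Finset.card_le_card hsub
  have hlt : ∀ m : ℕ, m < pfun b j → TD D (m : ℝ) ≤ j := by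
    intro m hm
    rw [TD_coe]
    have hsub : (boxP D m).filter (fun f => ∏ k, ((f k : ℕ)) ≤ m)
        ⊆ (Finset.range j).image b := by
      intro f hf
      have hprod : ∏ k, ((f k : ℕ)) ≤ m := (Finset.mem_filter.1 hf).2
      simp only [Finset.mem_image, Finset.mem_range]
      refine ⟨b.symm f, ?_, b.apply_symm_apply f⟩
      by_contra hcon
      push_neg at hcon
      have h1 : pfun b j ≤ pfun b (b.symm f) := hmono hcon
      have h2 : pfun b (b.symm f) = ∏ k, ((f k : ℕ)) := by
        unfold pfun
        rw [b.apply_symm_apply]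
      omega
    calc ((boxP D m).filter (fun f => ∏ k, ((f k : ℕ)) ≤ m)).card
        ≤ ((Finset.range j).image b).card := Finset.card_le_card hsub
      _ ≤ j := le_trans Finset.card_image_le (by rw [Finset.card_range])
  apply le_antisymm
  · exact Nat.sInf_le ⟨pfun_pos b j, hmemT⟩
  · have hne : {m : ℕ | 0 < m ∧ j + 1 ≤ TD D (m : ℝ)}.Nonempty :=
      ⟨pfun b j, pfun_pos b j, hmemT⟩
    have hc := Nat.sInf_mem hne
    have h2 : j + 1 ≤ TD D ((cseq D (j + 1) : ℕ) : ℝ) := hc.2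
    by_contra h
    push_neg at h
    have h3 := hlt _ h
    omega

lemma cseq_mem {D j : ℕ} (hD : 1 ≤ D) (hj : 1 ≤ j) :
    0 < cseq D j ∧ j ≤ TD D ((cseq D j : ℕ) : ℝ) := by
  have hne : {m : ℕ | 0 < m ∧ j ≤ TD D (m : ℝ)}.Nonempty := ⟨j, by omega, le_TD hD⟩
  exact Nat.sInf_mem hne

lemma cseq_le_self {D j : ℕ} (hD : 1 ≤ D) (hj : 1 ≤ j) : cseq D j ≤ j :=
  Nat.sInf_le ⟨by omega, le_TD hD⟩

lemma cseq_le_of {D j m : ℕ} (hm : 0 < m) (h : j ≤ TD D (m : ℝ)) : cseq D j ≤ m :=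
  Nat.sInf_le ⟨hm, h⟩

lemma two_le_cseq {D j : ℕ} (hD : 1 ≤ D) (hj : 2 ≤ j) : 2 ≤ cseq D j := by
  have h1 := (cseq_mem hD (by omega : 1 ≤ j)).1
  have h2 := (cseq_mem hD (by omega : 1 ≤ j)).2
  by_contra h
  push_neg at h
  have hc1 : cseq D j = 1 := by omega
  rw [hc1, TD_one] at h2
  omega

open Filter in
lemma cseq_bounds (D : ℕ) (hD : 2 ≤ D) : ∃ K₁ K₂ : ℝ, 0 < K₁ ∧ 0 < K₂ ∧
    ∀ j : ℕ, 2 ≤ j →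
      K₁ * ((j : ℝ) / (Real.log j) ^ (D - 1)) ≤ (cseq D j : ℝ) ∧
      (cseq D j : ℝ) ≤ K₂ * ((j : ℝ) / (Real.log j) ^ (D - 1)) := by
  have hD1 : 1 ≤ D := by omega
  obtain ⟨F, hF⟩ : ∃ F, D - 1 = F := ⟨D - 1, rfl⟩
  have hF1 : 1 ≤ F := by omega
  obtain ⟨a, ha, N₀, hN₀, hlow⟩ := TD_lower D hD1
  set B : ℝ := 2 ^ (F + 1) / a with hB
  have hBpos : 0 < B := by positivity
  -- eventual smallness of (log x)^F vs √x
  have hoo' : ∀ᶠ x : ℝ in atTop, (Real.log x) ^ F ≤ B * x ^ (1/2 : ℝ) := by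
    have h1 := (isLittleO_log_rpow_rpow_atTop (F : ℝ) one_half_pos).def hBpos
    filter_upwards [h1, eventually_ge_atTop (1 : ℝ)] with x hx hx1
    have hlx : 0 ≤ Real.log x := Real.log_nonneg hx1
    have hxx : (0 : ℝ) ≤ x := by linarith
    rw [Real.norm_eq_abs, Real.norm_eq_abs, abs_of_nonneg (Real.rpow_nonneg hlx _),
      abs_of_nonneg (Real.rpow_nonneg hxx _), Real.rpow_natCast] at hx
    exact hx
  obtain ⟨X, hX⟩ := eventually_atTop.1 hoo'
  set J : ℕ := max ⌈X⌉₊ (max (N₀ * N₀) 16) with hJ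
  -- the two constants
  refine ⟨(1/3) ^ F, 2 * B ⊔ ((Real.log J) ^ F + 1), by positivity,
    lt_max_of_lt_right (by positivity), fun j hj => ?_⟩
  have hj0 : (0 : ℝ) < j := by exact_mod_cast (by omega : 0 < j)
  have hlog2 : (0.6931471803 : ℝ) < Real.log 2 := Real.log_two_gt_d9
  have hlogj2 : Real.log 2 ≤ Real.log j := by
    apply Real.log_le_log (by norm_num)
    exact_mod_cast hj
  have hlogj0 : (0 : ℝ) < Real.log j := by linarith
  have hL : (0 : ℝ) < (Real.log j) ^ (D - 1) := pow_pos hlogj0 _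
  constructor
  · -- lower bound
    have hc2 : 2 ≤ cseq D j := two_le_cseq hD1 hj
    have hcj : cseq D j ≤ j := cseq_le_self hD1 (by omega)
    have hTDc : j ≤ TD D ((cseq D j : ℕ) : ℝ) := (cseq_mem hD1 (by omega)).2
    have hup := TD_upper D hD1 (cseq D j)
    have hlogc : Real.log (cseq D j) ≤ Real.log j := by
      apply Real.log_le_log (by exact_mod_cast (by omega : 0 < cseq D j))
      exact_mod_cast hcj
    have h1c : 1 + Real.log (cseq D j) ≤ 3 * Real.log j := by linarith
    have hkey : (j : ℝ) ≤ (cseq D j : ℝ) * (3 ^ (D-1) * (Real.log j) ^ (D-1)) := by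
      have h2 : (j : ℝ) ≤ (TD D ((cseq D j : ℕ) : ℝ) : ℝ) := by exact_mod_cast hTDc
      have h3 : (0 : ℝ) ≤ 1 + Real.log (cseq D j) := by
        have := Real.log_natCast_nonneg (cseq D j); linarith
      have h4 : (1 + Real.log (cseq D j)) ^ (D-1) ≤ (3 * Real.log j) ^ (D-1) :=
        pow_le_pow_left₀ h3 h1c _
      calc (j : ℝ) ≤ (TD D ((cseq D j : ℕ) : ℝ) : ℝ) := h2
        _ ≤ (cseq D j : ℝ) * (1 + Real.log (cseq D j)) ^ (D-1) := hup
        _ ≤ (cseq D j : ℝ) * (3 * Real.log j) ^ (D-1) := by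
            apply mul_le_mul_of_nonneg_left h4 (by positivity)
        _ = (cseq D j : ℝ) * (3 ^ (D-1) * (Real.log j) ^ (D-1)) := by rw [mul_pow]
    rw [mul_div_assoc', div_le_iff₀ hL]
    have hK3 : ((1:ℝ)/3) ^ (D-1) * 3 ^ (D-1) = 1 := by
      rw [← mul_pow]; norm_num
    calc ((1:ℝ)/3) ^ F * j = ((1:ℝ)/3) ^ (D-1) * j := by rw [hF]
      _ ≤ ((1:ℝ)/3) ^ (D-1) * ((cseq D j : ℝ) * (3 ^ (D-1) * (Real.log j) ^ (D-1))) :=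
          mul_le_mul_of_nonneg_left hkey (by positivity)
      _ = (((1:ℝ)/3) ^ (D-1) * 3 ^ (D-1)) * ((cseq D j : ℝ) * (Real.log j) ^ (D-1)) := by
          ring
      _ = (cseq D j : ℝ) * (Real.log j) ^ (D-1) := by rw [hK3, one_mul]
  · -- upper bound
    rcases le_or_gt J j with hbig | hsmall
    · -- large j
      have hXj : X ≤ (j : ℝ) := by
        have h1 : (⌈X⌉₊ : ℝ) ≤ (j : ℝ) := by
          exact_mod_cast le_trans (le_max_left _ _) hbig
        exact le_trans (Nat.le_ceil X) h1
      have hN2j : N₀ * N₀ ≤ j := le_trans (le_trans (le_max_left _ _) (le_max_right _ _)) hbig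
      have h16j : 16 ≤ j := le_trans (le_trans (le_max_right _ _) (le_max_right _ _)) hbig
      have hsq : (Real.log j) ^ F ≤ B * (j : ℝ) ^ (1/2 : ℝ) := hX _ hXj
      have hLF : (0 : ℝ) < (Real.log j) ^ F := pow_pos hlogj0 _
      have hrt0 : (0 : ℝ) < (j : ℝ) ^ (1/2 : ℝ) := Real.rpow_pos_of_pos hj0 _
      set y : ℝ := B * j / (Real.log j) ^ F with hy
      have hrtsq : (j : ℝ) ^ (1/2 : ℝ) * (j : ℝ) ^ (1/2 : ℝ) = j := by
        rw [← Real.rpow_add hj0]; norm_num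
      have hy_ge : (j : ℝ) ^ (1/2 : ℝ) ≤ y := by
        rw [hy, le_div_iff₀ hLF]
        calc (j : ℝ) ^ (1/2 : ℝ) * (Real.log j) ^ F
            ≤ (j : ℝ) ^ (1/2 : ℝ) * (B * (j : ℝ) ^ (1/2 : ℝ)) :=
              mul_le_mul_of_nonneg_left hsq hrt0.le
          _ = B * ((j : ℝ) ^ (1/2 : ℝ) * (j : ℝ) ^ (1/2 : ℝ)) := by ring
          _ = B * j := by rw [hrtsq]
      set m : ℕ := ⌈y⌉₊ with hm
      have hy_pos : 0 < y := lt_of_lt_of_le hrt0 hy_ge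
      have hmy : y ≤ m := Nat.le_ceil y
      have hNrt : (N₀ : ℝ) ≤ (j : ℝ) ^ (1/2 : ℝ) := by
        have h1 : ((N₀ : ℝ)) ^ (2 : ℕ) ≤ (j : ℝ) := by
          have : ((N₀ * N₀ : ℕ) : ℝ) ≤ ((j : ℕ) : ℝ) := by exact_mod_cast hN2j
          push_cast at this
          nlinarith [this]
        have h2 : ((N₀ : ℝ) ^ (2:ℕ)) ^ (1/2 : ℝ) ≤ (j : ℝ) ^ (1/2 : ℝ) :=
          Real.rpow_le_rpow (by positivity) h1 (by norm_num)
        rwa [← Real.rpow_natCast (N₀ : ℝ) 2, ← Real.rpow_mul (by positivity), 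
          (by norm_num : ((2:ℕ):ℝ) * (1/2 : ℝ) = 1), Real.rpow_one] at h2
      have hmN : N₀ ≤ m := by
        have : (N₀ : ℝ) ≤ (m : ℝ) := le_trans hNrt (le_trans hy_ge hmy)
        exact_mod_cast this
      have hm0 : 0 < m := by omega
      have hrt4 : (4 : ℝ) ≤ (j : ℝ) ^ (1/2 : ℝ) := by
        have h1 : ((4 : ℝ)) ^ (2 : ℕ) ≤ (j : ℝ) := by
          norm_num
          exact_mod_cast h16j
        have h2 : ((4 : ℝ) ^ (2:ℕ)) ^ (1/2 : ℝ) ≤ (j : ℝ) ^ (1/2 : ℝ) :=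
          Real.rpow_le_rpow (by positivity) h1 (by norm_num)
        rwa [← Real.rpow_natCast (4 : ℝ) 2, ← Real.rpow_mul (by positivity),
          (by norm_num : ((2:ℕ):ℝ) * (1/2 : ℝ) = 1), Real.rpow_one] at h2
      have hlogm : (1/2 : ℝ) * Real.log j ≤ Real.log m := by
        have h1 : Real.log ((j : ℝ) ^ (1/2 : ℝ)) ≤ Real.log m :=
          Real.log_le_log hrt0 (le_trans hy_ge hmy)
        rwa [Real.log_rpow hj0] at h1
      have hTDm : j ≤ TD D ((m : ℕ) : ℝ) := by
        have h1 := hlow m hmN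
        have h2 : ((1/2 : ℝ) * Real.log j) ^ F ≤ (Real.log m) ^ F :=
          pow_le_pow_left₀ (by positivity) hlogm _
        have hkey2 : 2 * (j : ℝ) ≤ a * m * (Real.log m) ^ (D - 1) := by
          rw [hF]
          calc 2 * (j : ℝ) = a * (B * j / (Real.log j) ^ F) * ((1/2) * Real.log j) ^ F := by
                rw [mul_pow, hB]
                field_simp
                rw [pow_succ, mul_right_comm, ← mul_pow]; norm_num
            _ ≤ a * m * ((1/2) * Real.log j) ^ F := by
                apply mul_le_mul_of_nonneg_right
                  (mul_le_mul_of_nonneg_left (hy ▸ hmy) ha.le) (by positivity)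
            _ ≤ a * m * (Real.log m) ^ F := by
                apply mul_le_mul_of_nonneg_left h2 (by positivity)
        have h3 : (j : ℝ) ≤ (TD D ((m : ℕ) : ℝ) : ℝ) := by
          have := le_trans hkey2 h1
          linarith
        exact_mod_cast h3
      have hcm : cseq D j ≤ m := cseq_le_of hm0 hTDm
      have hm2y : (m : ℝ) ≤ 2 * y := by
        have h1 : (m : ℝ) < y + 1 := Nat.ceil_lt_add_one hy_pos.le
        have hy1 : (1 : ℝ) ≤ y := le_trans (by linarith) hy_ge
        linarith
      calc (cseq D j : ℝ) ≤ (m : ℝ) := by exact_mod_cast hcm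
        _ ≤ 2 * y := hm2y
        _ = (2 * B) * ((j : ℝ) / (Real.log j) ^ (D - 1)) := by
            rw [hy, hF]; ring
        _ ≤ (2 * B ⊔ ((Real.log J) ^ F + 1)) * ((j : ℝ) / (Real.log j) ^ (D - 1)) := by
            apply mul_le_mul_of_nonneg_right (le_max_left _ _) (by positivity)
    · -- small j
      have hcj : cseq D j ≤ j := cseq_le_self hD1 (by omega)
      have hlogJ : Real.log j ≤ Real.log J := by
        apply Real.log_le_log (by norm_num [hj0])
        exact_mod_cast hsmall.le
      have hLK : (Real.log j) ^ (D - 1) ≤ (2 * B ⊔ ((Real.log J) ^ F + 1)) := by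
        rw [hF]
        calc (Real.log j) ^ F ≤ (Real.log J) ^ F := pow_le_pow_left₀ hlogj0.le hlogJ _
          _ ≤ (Real.log J) ^ F + 1 := by linarith
          _ ≤ _ := le_max_right _ _
      calc (cseq D j : ℝ) ≤ (j : ℝ) := by exact_mod_cast hcj
        _ = ((j : ℝ) / (Real.log j) ^ (D - 1)) * (Real.log j) ^ (D - 1) := by
            field_simp
        _ ≤ ((j : ℝ) / (Real.log j) ^ (D - 1)) * (2 * B ⊔ ((Real.log J) ^ F + 1)) := by
            apply mul_le_mul_of_nonneg_left hLK (by positivity)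
        _ = (2 * B ⊔ ((Real.log J) ^ F + 1)) * ((j : ℝ) / (Real.log j) ^ (D - 1)) := by
            ring

/-- For `s > 0`, any nondecreasing enumeration `j ↦ (∏_k (b (j−1))^k)^s` (with multiplicity,
indexed so that `j = 1` corresponds to `b 0`) of the multiset
`{ (∏_k 𝐣^k)^s : 𝐣 ∈ (ℕ⁺)^D }` coincides with `(c_j)^s` and is `Θ((j / log^{D−1} j)^s)`. -/
theorem stmt10 (D : ℕ) (hD : 2 ≤ D) (s : ℝ) (hs : 0 < s) :
    ∃ C₁ C₂ : ℝ, 0 < C₁ ∧ 0 < C₂ ∧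
    ∀ b : ℕ ≃ (Fin D → ℕ+),
      Monotone (fun j : ℕ => ((∏ k, ((b j) k : ℕ) : ℕ) : ℝ) ^ s) →
      (∀ j : ℕ, 1 ≤ j →
        ((∏ k, ((b (j - 1)) k : ℕ) : ℕ) : ℝ) ^ s = (cseq D j : ℝ) ^ s) ∧
      (∀ j : ℕ, 2 ≤ j →
        C₁ * ((j : ℝ) / (Real.log j) ^ (D - 1)) ^ s
            ≤ ((∏ k, ((b (j - 1)) k : ℕ) : ℕ) : ℝ) ^ s ∧
        ((∏ k, ((b (j - 1)) k : ℕ) : ℕ) : ℝ) ^ s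
            ≤ C₂ * ((j : ℝ) / (Real.log j) ^ (D - 1)) ^ s) := by
  obtain ⟨K₁, K₂, hK₁, hK₂, hbounds⟩ := cseq_bounds D hD
  refine ⟨K₁ ^ s, K₂ ^ s, Real.rpow_pos_of_pos hK₁ s, Real.rpow_pos_of_pos hK₂ s,
    fun b hmono => ?_⟩
  have hpm : Monotone (pfun b) := by
    intro i j hij
    by_contra hcon
    push_neg at hcon
    have hlt : ((pfun b j : ℕ) : ℝ) < ((pfun b i : ℕ) : ℝ) := by exact_mod_cast hcon
    have h2 : ((pfun b j : ℕ) : ℝ) ^ s < ((pfun b i : ℕ) : ℝ) ^ s :=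
      Real.rpow_lt_rpow (by positivity) hlt hs
    have h3 := hmono hij
    simp only at h3
    have : ((pfun b i : ℕ) : ℝ) ^ s ≤ ((pfun b j : ℕ) : ℝ) ^ s := h3
    linarith
  have heq : ∀ j : ℕ, 1 ≤ j → pfun b (j - 1) = cseq D j := by
    intro j hj
    obtain ⟨i, rfl⟩ : ∃ i, j = i + 1 := ⟨j - 1, by omega⟩
    simpa using (cseq_eq_pfun b hpm i).symm
  have hpe : ∀ j : ℕ, 1 ≤ j →
      ((∏ k, ((b (j - 1)) k : ℕ) : ℕ) : ℝ) = (cseq D j : ℝ) := by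
    intro j hj
    have h := heq j hj
    unfold pfun at h
    exact_mod_cast congrArg (Nat.cast : ℕ → ℝ) h
  constructor
  · intro j hj
    rw [hpe j hj]
  · intro j hj
    have hcb := hbounds j hj
    rw [hpe j (by omega)]
    have hj0 : (0 : ℝ) < j := by exact_mod_cast (by omega : 0 < j)
    have hlog2 : (0.6931471803 : ℝ) < Real.log 2 := Real.log_two_gt_d9
    have hlogj0 : (0 : ℝ) < Real.log j := by
      have : Real.log 2 ≤ Real.log j := by
        apply Real.log_le_log (by norm_num)
        exact_mod_cast hj
      linarith
    have ht0 : (0 : ℝ) ≤ (j : ℝ) / (Real.log j) ^ (D - 1) := by positivity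
    constructor
    · rw [← Real.mul_rpow hK₁.le ht0]
      exact Real.rpow_le_rpow (by positivity) hcb.1 hs.le
    · rw [← Real.mul_rpow hK₂.le ht0]
      exact Real.rpow_le_rpow (by positivity) hcb.2 hs.le
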